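/- arXiv:1311.2127 — 4 statements merged into one kernel-verified Lean document; each statement's English description precedes it below -/
import Mathlib

section
/- With u = p * m written as u = I₁ + I₂ where I₁(x) = (1/2)e^{-x} ∫_{-∞}^x e^y m(y) dy and I₂(x) = (1/2)e^x ∫_x^∞ e^{-y} m(y) dy, one has u(x) + u_x(x) = e^x ∫_x^∞ e^{-y} m(y) dy. Consequently, if m is nonnegative everywhere, then u_x(x) ≥ -u(x) for all x. -/
open MeasureTheory Real Set

/-- `u + u_x = e^x ∫_x^∞ e^{-y} m(y) dy`; if `m ≥ 0` then `u_x ≥ -u`. -/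
theorem stmt2 (m I₁ I₂ u ux : ℝ → ℝ)
    (hmc : Continuous m)
    (hmp : Integrable (fun y => Real.exp y * m y))
    (hmm : Integrable (fun y => Real.exp (-y) * m y))
    (hI₁ : ∀ x, I₁ x = (1 / 2) * Real.exp (-x) * (∫ y in Set.Iic x, Real.exp y * m y))
    (hI₂ : ∀ x, I₂ x = (1 / 2) * Real.exp x * (∫ y in Set.Ici x, Real.exp (-y) * m y))
    (hu : ∀ x, u x = I₁ x + I₂ x)
    (hux : ∀ x, ux x = -I₁ x + I₂ x) :
    (∀ x, u x + ux x = Real.exp x * (∫ y in Set.Ici x, Real.exp (-y) * m y)) ∧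
    ((∀ y, 0 ≤ m y) → ∀ x, -(u x) ≤ ux x) := by
  have key : ∀ x, u x + ux x = Real.exp x * (∫ y in Set.Ici x, Real.exp (-y) * m y) := by
    intro x
    rw [hu, hux, hI₂]
    ring
  refine ⟨key, fun hm x => ?_⟩
  have h0 : 0 ≤ ∫ y in Set.Ici x, Real.exp (-y) * m y :=
    setIntegral_nonneg measurableSet_Ici fun y _ =>
      mul_nonneg (Real.exp_pos _).le (hm y)
  have := key x
  nlinarith [Real.exp_pos x, mul_nonneg (Real.exp_pos x).le h0]
end

section
/- Let (u,v) be a smooth solution of the system m_t + 2v_x m + v m_x = 0, n_t + 2u_x n + u n_x = 0 (with m = u - u_{xx}, n = v - v_{xx}) on [0,T), and let φ, ξ be the flows of v and u respectively (φ_t = v(φ,t), φ(x,0) = x; ξ_t = u(ξ,t), ξ(x,0) = x). Then for all x and t ∈ [0,T): m(φ(x,t),t) φ_x(x,t)² = m(x,0) and n(ξ(x,t),t) ξ_x(x,t)² = n(x,0). -/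
open MeasureTheory Real Set

lemma hasDerivAt_sec1 {F : ℝ × ℝ → ℝ} {x t : ℝ} (hF : DifferentiableAt ℝ F (x, t)) :
    HasDerivAt (fun x' => F (x', t)) (fderiv ℝ F (x, t) (1, 0)) x := by
  have h1 : HasDerivAt (fun x' : ℝ => (x', t)) ((1 : ℝ), (0 : ℝ)) x :=
    (hasDerivAt_id x).prodMk (hasDerivAt_const x t)
  exact hF.hasFDerivAt.comp_hasDerivAt x h1

lemma hasDerivAt_sec2 {F : ℝ × ℝ → ℝ} {x t : ℝ} (hF : DifferentiableAt ℝ F (x, t)) :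
    HasDerivAt (fun τ => F (x, τ)) (fderiv ℝ F (x, t) (0, 1)) t := by
  have h1 : HasDerivAt (fun τ : ℝ => (x, τ)) ((0 : ℝ), (1 : ℝ)) t :=
    (hasDerivAt_const t x).prodMk (hasDerivAt_id t)
  exact hF.hasFDerivAt.comp_hasDerivAt t h1

lemma deriv_sec1 {F : ℝ × ℝ → ℝ} {x t : ℝ} (hF : DifferentiableAt ℝ F (x, t)) :
    deriv (fun x' => F (x', t)) x = fderiv ℝ F (x, t) (1, 0) :=
  (hasDerivAt_sec1 hF).deriv

lemma deriv_sec2 {F : ℝ × ℝ → ℝ} {x t : ℝ} (hF : DifferentiableAt ℝ F (x, t)) :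
    deriv (fun τ => F (x, τ)) t = fderiv ℝ F (x, t) (0, 1) :=
  (hasDerivAt_sec2 hF).deriv

-- partial in x as a jointly smooth function
lemma contDiff_partial1 {F : ℝ × ℝ → ℝ} (hF : ContDiff ℝ (⊤ : ℕ∞) F) :
    ContDiff ℝ (⊤ : ℕ∞) (fun q : ℝ × ℝ => fderiv ℝ F q (1, 0)) :=
  (hF.fderiv_right (by simp)).clm_apply contDiff_const

lemma m_eq {u m : ℝ → ℝ → ℝ} (hu : ContDiff ℝ (⊤ : ℕ∞) (fun q : ℝ × ℝ => u q.1 q.2))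
    (hm : ∀ x t, m x t = u x t - deriv (deriv (fun x' => u x' t)) x) :
    ∀ q : ℝ × ℝ, m q.1 q.2 = u q.1 q.2
      - fderiv ℝ (fun p : ℝ × ℝ => fderiv ℝ (fun r : ℝ × ℝ => u r.1 r.2) p (1, 0)) q (1, 0) := by
  rintro ⟨x, t⟩
  have hux : ∀ x', deriv (fun x'' => u x'' t) x'
      = fderiv ℝ (fun r : ℝ × ℝ => u r.1 r.2) (x', t) (1, 0) := fun x' =>
    deriv_sec1 (hu.differentiable (by simp) (x', t))
  have : deriv (deriv (fun x' => u x' t)) x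
      = fderiv ℝ (fun p : ℝ × ℝ => fderiv ℝ (fun r : ℝ × ℝ => u r.1 r.2) p (1, 0)) (x, t) (1, 0) := by
    have h2 : deriv (fun x' => u x' t) = fun x' => deriv (fun x'' => u x'' t) x' := rfl
    rw [h2]
    have h3 : (fun x' => deriv (fun x'' => u x'' t) x')
        = fun x' => fderiv ℝ (fun r : ℝ × ℝ => u r.1 r.2) (x', t) (1, 0) := funext hux
    rw [h3]
    exact deriv_sec1 ((contDiff_partial1 hu).differentiable (by simp) (x, t))
  simp [hm, this]

lemma contDiff_m {u m : ℝ → ℝ → ℝ} (hu : ContDiff ℝ (⊤ : ℕ∞) (fun q : ℝ × ℝ => u q.1 q.2))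
    (hm : ∀ x t, m x t = u x t - deriv (deriv (fun x' => u x' t)) x) :
    ContDiff ℝ (⊤ : ℕ∞) (fun q : ℝ × ℝ => m q.1 q.2) := by
  have := m_eq hu hm
  have h : (fun q : ℝ × ℝ => m q.1 q.2) = fun q : ℝ × ℝ => u q.1 q.2
      - fderiv ℝ (fun p : ℝ × ℝ => fderiv ℝ (fun r : ℝ × ℝ => u r.1 r.2) p (1, 0)) q (1, 0) :=
    funext this
  rw [h]
  exact hu.sub (contDiff_partial1 (contDiff_partial1 hu))

-- derivative of p ↦ fderiv Φ p w  in direction v equals second fderiv applied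
lemma fderiv_apply_const {F : ℝ × ℝ → ℝ} (hF : ContDiff ℝ (⊤ : ℕ∞) F) (p w z : ℝ × ℝ) :
    fderiv ℝ (fun q => fderiv ℝ F q w) p z = fderiv ℝ (fderiv ℝ F) p z w := by
  have hdf : DifferentiableAt ℝ (fderiv ℝ F) p :=
    ((hF.fderiv_right (m := 1) (WithTop.coe_le_coe.mpr le_top)).differentiable one_ne_zero) p
  rw [fderiv_clm_apply hdf (differentiableAt_const w)]
  simp

lemma contDiff_partialw {F : ℝ × ℝ → ℝ} (hF : ContDiff ℝ (⊤ : ℕ∞) F) (w : ℝ × ℝ) :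
    ContDiff ℝ (⊤ : ℕ∞) (fun q : ℝ × ℝ => fderiv ℝ F q w) :=
  (hF.fderiv_right (by simp)).clm_apply contDiff_const

lemma hasDerivAt_sec1' {F : ℝ → ℝ → ℝ} (hF : ContDiff ℝ (⊤ : ℕ∞) (fun q : ℝ × ℝ => F q.1 q.2))
    (x t : ℝ) : HasDerivAt (fun x' => F x' t) (deriv (fun x' => F x' t) x) x := by
  have h := hasDerivAt_sec1 (F := fun q : ℝ × ℝ => F q.1 q.2) (x := x) (t := t)
    (hF.differentiable (by simp) (x, t))
  rwa [← h.deriv] at h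

lemma claim2 {T : ℝ} {v φ : ℝ → ℝ → ℝ}
    (hv : ContDiff ℝ (⊤ : ℕ∞) (fun q : ℝ × ℝ => v q.1 q.2))
    (hφs : ContDiff ℝ (⊤ : ℕ∞) (fun q : ℝ × ℝ => φ q.1 q.2))
    (hφ : ∀ x : ℝ, ∀ t ∈ Set.Ico (0:ℝ) T, HasDerivAt (fun τ => φ x τ) (v (φ x t) t) t)
    (x : ℝ) {t : ℝ} (ht : t ∈ Set.Ico (0:ℝ) T) :
    HasDerivAt (fun τ => deriv (fun x' => φ x' τ) x)
      (deriv (fun x' => v x' t) (φ x t) * deriv (fun x' => φ x' t) x) t := by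
  set Φ : ℝ × ℝ → ℝ := fun q => φ q.1 q.2 with hΦ
  have hΦd : Differentiable ℝ Φ := hφs.differentiable (by simp)
  have hA : ContDiff ℝ (⊤ : ℕ∞) (fun q : ℝ × ℝ => fderiv ℝ Φ q (1, 0)) := contDiff_partialw hφs _
  have hfun : (fun τ => deriv (fun x' => φ x' τ) x)
      = fun τ => fderiv ℝ Φ (x, τ) (1, 0) := by
    funext τ; exact deriv_sec1 (hΦd (x, τ))
  rw [hfun]
  have h1 : HasDerivAt (fun τ => fderiv ℝ Φ (x, τ) (1, 0))
      (fderiv ℝ (fun q : ℝ × ℝ => fderiv ℝ Φ q (1, 0)) (x, t) (0, 1)) t :=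
    hasDerivAt_sec2 (hA.differentiable (by simp) (x, t))
  have h2 : fderiv ℝ (fun q : ℝ × ℝ => fderiv ℝ Φ q (1, 0)) (x, t) (0, 1)
      = fderiv ℝ (fun q : ℝ × ℝ => fderiv ℝ Φ q (0, 1)) (x, t) (1, 0) := by
    rw [fderiv_apply_const hφs, fderiv_apply_const hφs]
    exact (hφs.contDiffAt.isSymmSndFDerivAt (by simp [minSmoothness_of_isRCLikeNormedField]; exact WithTop.coe_le_coe.mpr le_top)) _ _
  have h3 : (fun x' => fderiv ℝ Φ (x', t) (0, 1)) = fun x' => v (φ x' t) t := by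
    funext x'
    rw [← (hφ x' t ht).deriv]
    exact (deriv_sec2 (hΦd (x', t))).symm
  have h4 : fderiv ℝ (fun q : ℝ × ℝ => fderiv ℝ Φ q (0, 1)) (x, t) (1, 0)
      = deriv (fun x' => v (φ x' t) t) x := by
    rw [← deriv_sec1 (F := fun q : ℝ × ℝ => fderiv ℝ Φ q (0, 1)) (x := x) (t := t)
      ((contDiff_partialw hφs _).differentiable (by simp) (x, t))]
    exact congrArg (fun f => deriv f x) (funext fun x' => congrFun h3 x' ▸ rfl)
  have h5 : deriv (fun x' => v (φ x' t) t) x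
      = deriv (fun x' => v x' t) (φ x t) * deriv (fun x' => φ x' t) x := by
    exact (HasDerivAt.comp x (hasDerivAt_sec1' hv (φ x t) t) (hasDerivAt_sec1' hφs x t)).deriv
  rw [h2, h4, h5] at h1
  exact h1

lemma claim3 {T : ℝ} {v m φ : ℝ → ℝ → ℝ}
    (hM : ContDiff ℝ (⊤ : ℕ∞) (fun q : ℝ × ℝ => m q.1 q.2))
    (hφ : ∀ x : ℝ, ∀ t ∈ Set.Ico (0:ℝ) T, HasDerivAt (fun τ => φ x τ) (v (φ x t) t) t)
    (x : ℝ) {t : ℝ} (ht : t ∈ Set.Ico (0:ℝ) T) :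
    HasDerivAt (fun τ => m (φ x τ) τ)
      (v (φ x t) t * deriv (fun x' => m x' t) (φ x t) + deriv (fun τ => m (φ x t) τ) t) t := by
  set M : ℝ × ℝ → ℝ := fun q => m q.1 q.2 with hMdef
  have hγ : HasDerivAt (fun τ => ((φ x τ : ℝ), τ)) ((v (φ x t) t, (1:ℝ))) t :=
    (hφ x t ht).prodMk (hasDerivAt_id t)
  have hMd : DifferentiableAt ℝ M (φ x t, t) := hM.differentiable (by simp) _
  have h : HasDerivAt (fun τ => m (φ x τ) τ) (fderiv ℝ M (φ x t, t) (v (φ x t) t, 1)) t :=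
    HasFDerivAt.comp_hasDerivAt (l := M) (f := fun τ => ((φ x τ : ℝ), τ)) t
      hMd.hasFDerivAt hγ
  have hval : fderiv ℝ M (φ x t, t) (v (φ x t) t, 1)
      = v (φ x t) t * deriv (fun x' => m x' t) (φ x t) + deriv (fun τ => m (φ x t) τ) t := by
    have hsplit : ((v (φ x t) t, (1:ℝ)) : ℝ × ℝ)
        = v (φ x t) t • ((1:ℝ), (0:ℝ)) + ((0:ℝ), (1:ℝ)) := by simp
    rw [hsplit, map_add, ContinuousLinearMap.map_smul, deriv_sec1 hMd, deriv_sec2 hMd]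
    simp [smul_eq_mul]
  rw [hval] at h
  exact h

lemma key {T : ℝ} (hT : 0 < T) (u v m φ : ℝ → ℝ → ℝ)
    (hu : ContDiff ℝ (⊤ : ℕ∞) (fun q : ℝ × ℝ => u q.1 q.2))
    (hv : ContDiff ℝ (⊤ : ℕ∞) (fun q : ℝ × ℝ => v q.1 q.2))
    (hφs : ContDiff ℝ (⊤ : ℕ∞) (fun q : ℝ × ℝ => φ q.1 q.2))
    (hm : ∀ x t, m x t = u x t - deriv (deriv (fun x' => u x' t)) x)
    (heq1 : ∀ x : ℝ, ∀ t ∈ Set.Ico (0:ℝ) T,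
      deriv (fun τ => m x τ) t + 2 * deriv (fun x' => v x' t) x * m x t
        + v x t * deriv (fun x' => m x' t) x = 0)
    (hφ : ∀ x : ℝ, ∀ t ∈ Set.Ico (0:ℝ) T, HasDerivAt (fun τ => φ x τ) (v (φ x t) t) t)
    (hφ0 : ∀ x, φ x 0 = x) :
    ∀ x : ℝ, ∀ t ∈ Set.Ico (0:ℝ) T,
      m (φ x t) t * (deriv (fun x' => φ x' t) x) ^ 2 = m x 0 := by
  intro x t ht
  have hM : ContDiff ℝ (⊤ : ℕ∞) (fun q : ℝ × ℝ => m q.1 q.2) := contDiff_m hu hm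
  set g : ℝ → ℝ := fun τ => m (φ x τ) τ * (deriv (fun x' => φ x' τ) x) ^ 2 with hg
  -- derivative of g is zero on Ico 0 T
  have hg' : ∀ s ∈ Set.Ico (0:ℝ) T, HasDerivAt g 0 s := by
    intro s hs
    have h3 := claim3 hM hφ x hs
    have h2 := claim2 hv hφs hφ x hs
    have hq2 := h2.pow 2
    have := h3.mul hq2
    have heq := heq1 (φ x s) s hs
    set q := deriv (fun x' => φ x' s) x
    set a := v (φ x s) s
    set b := deriv (fun x' => m x' s) (φ x s)
    set c := deriv (fun τ => m (φ x s) τ) s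
    set d := deriv (fun x' => v x' s) (φ x s)
    have hz : (a * b + c) * q ^ 2
        + m (φ x s) s * (((2:ℕ):ℝ) * q ^ (2 - 1) * (d * q)) = 0 := by
      push_cast
      nlinarith [heq]
    exact hz ▸ this
  -- g is continuous
  have hgc : Continuous g := by
    have hqc : Continuous fun τ => deriv (fun x' => φ x' τ) x := by
      have : (fun τ => deriv (fun x' => φ x' τ) x)
          = fun τ => fderiv ℝ (fun q : ℝ × ℝ => φ q.1 q.2) (x, τ) (1, 0) := by
        funext τ; exact deriv_sec1 (hφs.differentiable (by simp) (x, τ))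
      rw [this]
      exact ((contDiff_partialw hφs _).continuous).comp
        (continuous_const.prodMk continuous_id)
    have hmc : Continuous fun τ => m (φ x τ) τ := by
      exact (hM.continuous).comp
        (((hφs.continuous).comp (continuous_const.prodMk continuous_id)).prodMk
          continuous_id)
    exact hmc.mul (hqc.pow 2)
  -- constancy
  have hconst : g t = g 0 := by
    have := constant_of_has_deriv_right_zero (f := g) (a := 0) (b := t)
      (hgc.continuousOn)
      (fun s hs => (hg' s ⟨hs.1, lt_of_le_of_lt (le_of_lt hs.2) ht.2⟩).hasDerivWithinAt)
    exact this t (Set.right_mem_Icc.mpr ht.1)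
  have hg0 : g 0 = m x 0 := by
    have hid : (fun x' => φ x' 0) = fun x' => x' := funext hφ0
    simp [hg, hφ0, hid, deriv_id]
  rw [← hg0]
  exact hconst


/-- along the flows `φ` of `v` and `ξ` of `u`, solutions of the CCCH
system satisfy `m(φ(x,t),t) φ_x(x,t)² = m(x,0)` and `n(ξ(x,t),t) ξ_x(x,t)² = n(x,0)`. -/
theorem stmt5 (T : ℝ) (hT : 0 < T) (u v m n φ ξ : ℝ → ℝ → ℝ)
    (hu : ContDiff ℝ (⊤ : ℕ∞) (fun q : ℝ × ℝ => u q.1 q.2))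
    (hv : ContDiff ℝ (⊤ : ℕ∞) (fun q : ℝ × ℝ => v q.1 q.2))
    (hφs : ContDiff ℝ (⊤ : ℕ∞) (fun q : ℝ × ℝ => φ q.1 q.2))
    (hξs : ContDiff ℝ (⊤ : ℕ∞) (fun q : ℝ × ℝ => ξ q.1 q.2))
    (hm : ∀ x t, m x t = u x t - deriv (deriv (fun x' => u x' t)) x)
    (hn : ∀ x t, n x t = v x t - deriv (deriv (fun x' => v x' t)) x)
    (heq1 : ∀ x : ℝ, ∀ t ∈ Set.Ico (0:ℝ) T,
      deriv (fun τ => m x τ) t + 2 * deriv (fun x' => v x' t) x * m x t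
        + v x t * deriv (fun x' => m x' t) x = 0)
    (heq2 : ∀ x : ℝ, ∀ t ∈ Set.Ico (0:ℝ) T,
      deriv (fun τ => n x τ) t + 2 * deriv (fun x' => u x' t) x * n x t
        + u x t * deriv (fun x' => n x' t) x = 0)
    (hφ : ∀ x : ℝ, ∀ t ∈ Set.Ico (0:ℝ) T, HasDerivAt (fun τ => φ x τ) (v (φ x t) t) t)
    (hφ0 : ∀ x, φ x 0 = x)
    (hξ : ∀ x : ℝ, ∀ t ∈ Set.Ico (0:ℝ) T, HasDerivAt (fun τ => ξ x τ) (u (ξ x t) t) t)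
    (hξ0 : ∀ x, ξ x 0 = x) :
    ∀ x : ℝ, ∀ t ∈ Set.Ico (0:ℝ) T,
      m (φ x t) t * (deriv (fun x' => φ x' t) x) ^ 2 = m x 0 ∧
      n (ξ x t) t * (deriv (fun x' => ξ x' t) x) ^ 2 = n x 0 := by
  intro x t ht
  exact ⟨key hT u v m φ hu hv hφs hm heq1 hφ hφ0 x t ht,
    key hT v u n ξ hv hu hξs hn heq2 hξ hξ0 x t ht⟩
end

section
/- Let (u,v) be a smooth solution of the CCCH system in the u,v variables: u_t - u_{xxt} + 2v_x u - 2v_x u_{xx} + v u_x - v u_{xxx} = 0 and v_t - v_{xxt} + 2u_x v - 2u_x v_{xx} + u v_x - u v_{xxx} = 0. Then L = u + v satisfies the conservation law (u+v)_t + ∂_x( uv + p * (2uv + u_x v_x) ) = 0, where p(x) = (1/2)e^{-|x|}. -/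
open MeasureTheory Real Set Filter

/-- A real function on the line that is integrable and decays to `0` at `±∞`. -/
def DecaysNicely (f : ℝ → ℝ) : Prop :=
  MeasureTheory.Integrable f ∧
    Filter.Tendsto f Filter.atTop (nhds 0) ∧ Filter.Tendsto f Filter.atBot (nhds 0)

private lemma bdd_of_decay {f : ℝ → ℝ} (hc : Continuous f)
    (ht : Tendsto f atTop (nhds 0)) (hb : Tendsto f atBot (nhds 0)) :
    ∃ C, ∀ x, |f x| ≤ C := by
  obtain ⟨X, hX⟩ := (Metric.tendsto_nhds.mp ht 1 one_pos).exists_forall_of_atTop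
  obtain ⟨Y, hY⟩ := (Metric.tendsto_nhds.mp hb 1 one_pos).exists_forall_of_atBot
  obtain ⟨C, hC⟩ := (isCompact_Icc (a := Y) (b := X)).exists_bound_of_continuousOn hc.continuousOn
  refine ⟨max C 1, fun x => ?_⟩
  rcases le_total x Y with h | h
  · have := hY x h; rw [Real.dist_eq, sub_zero] at this
    exact this.le.trans (le_max_right _ _)
  rcases le_total X x with h2 | h2
  · have := hX x h2; rw [Real.dist_eq, sub_zero] at this
    exact this.le.trans (le_max_right _ _)
  · exact le_trans (by simpa using hC x ⟨h, h2⟩) (le_max_left _ _)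

private lemma int_mul_bdd {f g : ℝ → ℝ} (hf : Integrable f) (hgc : Continuous g)
    (hgt : Tendsto g atTop (nhds 0)) (hgb : Tendsto g atBot (nhds 0)) :
    Integrable (fun x => g x * f x) := by
  obtain ⟨C, hC⟩ := bdd_of_decay hgc hgt hgb
  exact hf.bdd_mul (c := C) hgc.aestronglyMeasurable
    (ae_of_all _ fun x => by simpa [Real.norm_eq_abs] using hC x)

private lemma mul_tendsto0 {f g : ℝ → ℝ} {l : Filter ℝ} (hf : Tendsto f l (nhds 0))
    (hg : Tendsto g l (nhds 0)) : Tendsto (fun x => f x * g x) l (nhds 0) := by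
  simpa using hf.mul hg

private lemma intOn_exp_Iic {f : ℝ → ℝ} (hf : Integrable f) (x : ℝ) :
    IntegrableOn (fun y => Real.exp y * f y) (Iic x) := by
  refine Integrable.mono' ((hf.norm.const_mul (Real.exp x)).integrableOn)
    ((Real.continuous_exp.aestronglyMeasurable.restrict).mul hf.aestronglyMeasurable.restrict) ?_
  refine (ae_restrict_iff' measurableSet_Iic).2 (ae_of_all _ fun y hy => ?_)
  have : Real.exp y ≤ Real.exp x := Real.exp_le_exp.2 hy
  simp only [Real.norm_eq_abs, abs_mul, abs_exp, norm_norm]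
  exact mul_le_mul_of_nonneg_right this (abs_nonneg _) 

private lemma intOn_expneg_Ioi {f : ℝ → ℝ} (hf : Integrable f) (x : ℝ) :
    IntegrableOn (fun y => Real.exp (-y) * f y) (Ioi x) := by
  refine Integrable.mono' ((hf.norm.const_mul (Real.exp (-x))).integrableOn)
    (((Real.continuous_exp.comp continuous_neg).aestronglyMeasurable.restrict).mul
      hf.aestronglyMeasurable.restrict) ?_
  refine (ae_restrict_iff' measurableSet_Ioi).2 (ae_of_all _ fun y hy => ?_)
  have : Real.exp (-y) ≤ Real.exp (-x) := Real.exp_le_exp.2 (by linarith [hy.out.le])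
  simp only [Real.norm_eq_abs, abs_mul, abs_exp, norm_norm]
  exact mul_le_mul_of_nonneg_right this (abs_nonneg _) 

-- FTC on Iic: ∫_{Iic x} F' = F x, when F → 0 at -∞.
private lemma ftc_Iic {F F' : ℝ → ℝ} (hF : ∀ y, HasDerivAt F (F' y) y)
    (hlim : Tendsto F atBot (nhds 0)) {x : ℝ} (hint : IntegrableOn F' (Iic x)) :
    ∫ y in Iic x, F' y = F x := by
  simpa using integral_Iic_of_hasDerivAt_of_tendsto' (fun y _ => hF y) hint hlim

private lemma ftc_Ioi {F F' : ℝ → ℝ} (hF : ∀ y, HasDerivAt F (F' y) y)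
    (hlim : Tendsto F atTop (nhds 0)) {x : ℝ} (hint : IntegrableOn F' (Ioi x)) :
    ∫ y in Ioi x, F' y = -F x := by
  simpa using integral_Ioi_of_hasDerivAt_of_tendsto' (fun y _ => hF y) hint hlim

-- a function whose derivative is integrable has a finite limit at -∞ and +∞
private lemma tendsto_atBot_of_deriv_int {f f' : ℝ → ℝ} (hd : ∀ y, HasDerivAt f (f' y) y)
    (hi : Integrable f') : ∃ c, Tendsto f atBot (nhds c) := by
  have key : ∀ y : ℝ, f y = f 0 - ∫ s in y..(0:ℝ), f' s := by
    intro y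
    rw [intervalIntegral.integral_eq_sub_of_hasDerivAt (fun s _ => hd s)
      hi.intervalIntegrable]
    ring
  refine ⟨f 0 - ∫ s in Iic (0:ℝ), f' s, ?_⟩
  have h2 : Tendsto (fun y : ℝ => ∫ s in y..(0:ℝ), f' s) atBot
      (nhds (∫ s in Iic (0:ℝ), f' s)) :=
    intervalIntegral_tendsto_integral_Iic 0 hi.integrableOn tendsto_id
  exact Tendsto.congr (fun y => (key y).symm) (tendsto_const_nhds.sub h2)

private lemma tendsto_atTop_of_deriv_int {f f' : ℝ → ℝ} (hd : ∀ y, HasDerivAt f (f' y) y)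
    (hi : Integrable f') : ∃ c, Tendsto f atTop (nhds c) := by
  have key : ∀ y : ℝ, f y = f 0 + ∫ s in (0:ℝ)..y, f' s := by
    intro y
    rw [intervalIntegral.integral_eq_sub_of_hasDerivAt (fun s _ => hd s)
      hi.intervalIntegrable]
    ring
  refine ⟨f 0 + ∫ s in Ioi (0:ℝ), f' s, ?_⟩
  have h2 : Tendsto (fun y : ℝ => ∫ s in (0:ℝ)..y, f' s) atTop
      (nhds (∫ s in Ioi (0:ℝ), f' s)) :=
    intervalIntegral_tendsto_integral_Ioi 0 hi.integrableOn tendsto_id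
  exact Tendsto.congr (fun y => (key y).symm) (tendsto_const_nhds.add h2)

-- FTC-1 : derivative of x ↦ ∫_{Iic x} g
private lemma hasDerivAt_int_Iic {g : ℝ → ℝ} (hgc : Continuous g)
    (hgi : ∀ z : ℝ, IntegrableOn g (Iic z)) (x : ℝ) :
    HasDerivAt (fun z => ∫ y in Iic z, g y) (g x) x := by
  have key : ∀ z : ℝ, ∫ y in Iic z, g y = (∫ y in Iic (0:ℝ), g y) + ∫ y in (0:ℝ)..z, g y := by
    intro z
    rw [← intervalIntegral.integral_Iic_sub_Iic (hgi 0) (hgi z)]; ring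
  have h2 : HasDerivAt (fun z => (∫ y in Iic (0:ℝ), g y) + ∫ y in (0:ℝ)..z, g y) (g x) x := by
    refine HasDerivAt.const_add _ ?_
    exact intervalIntegral.integral_hasDerivAt_right
      ((hgc.intervalIntegrable _ _)) (hgc.stronglyMeasurableAtFilter _ _) hgc.continuousAt
  exact h2.congr_deriv rfl |>.congr_of_eventuallyEq (Eventually.of_forall key) |>.congr_deriv rfl

private lemma integral_Ioi_rep {h : ℝ → ℝ} (hi : ∀ z : ℝ, IntegrableOn h (Ioi z)) (x : ℝ) :
    ∫ y in Ioi x, h y = (∫ y in Ioi (0:ℝ), h y) - ∫ y in (0:ℝ)..x, h y := by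
  rcases le_total 0 x with hx | hx
  · have hsplit : ∫ y in Ioi (0:ℝ), h y = (∫ y in Ioc (0:ℝ) x, h y) + ∫ y in Ioi x, h y := by
      rw [← setIntegral_union (Ioc_disjoint_Ioi le_rfl) measurableSet_Ioi
        ((hi 0).mono_set Ioc_subset_Ioi_self) (hi x), Ioc_union_Ioi_eq_Ioi hx]
    rw [intervalIntegral.integral_of_le hx]
    linarith [hsplit]
  · have hsplit : ∫ y in Ioi x, h y = (∫ y in Ioc x 0, h y) + ∫ y in Ioi (0:ℝ), h y := by
      rw [← setIntegral_union (Ioc_disjoint_Ioi le_rfl) measurableSet_Ioi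
        ((hi x).mono_set Ioc_subset_Ioi_self) (hi 0), Ioc_union_Ioi_eq_Ioi hx]
    rw [intervalIntegral.integral_symm, intervalIntegral.integral_of_le hx]
    linarith [hsplit]

private lemma hasDerivAt_int_Ioi {g : ℝ → ℝ} (hgc : Continuous g)
    (hgi : ∀ z : ℝ, IntegrableOn g (Ioi z)) (x : ℝ) :
    HasDerivAt (fun z => ∫ y in Ioi z, g y) (-g x) x := by
  have h2 : HasDerivAt (fun z => (∫ y in Ioi (0:ℝ), g y) - ∫ y in (0:ℝ)..z, g y) (-g x) x := by
    refine HasDerivAt.const_sub _ ?_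
    exact intervalIntegral.integral_hasDerivAt_right
      (hgc.intervalIntegrable _ _) (hgc.stronglyMeasurableAtFilter _ _) hgc.continuousAt
  exact h2.congr_of_eventuallyEq (Eventually.of_forall (integral_Ioi_rep hgi))

private lemma hasDerivAt_conv {g : ℝ → ℝ} (hgc : Continuous g) (hgi : Integrable g) (x : ℝ) :
    HasDerivAt (fun z => ∫ y, (1/2) * Real.exp (-|z - y|) * g y)
      ((1/2) * (Real.exp x * (∫ y in Ioi x, Real.exp (-y) * g y)
        - Real.exp (-x) * (∫ y in Iic x, Real.exp y * g y))) x := by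
  have hIic : ∀ z : ℝ, IntegrableOn (fun y => Real.exp y * g y) (Iic z) :=
    intOn_exp_Iic hgi
  have hIoi : ∀ z : ℝ, IntegrableOn (fun y => Real.exp (-y) * g y) (Ioi z) :=
    intOn_expneg_Ioi hgi
  have htot : ∀ z : ℝ, Integrable (fun y => (1/2 : ℝ) * Real.exp (-|z - y|) * g y) := by
    intro z
    refine Integrable.mono' (hgi.norm.const_mul (1/2))
      (((continuous_const.mul
        (Real.continuous_exp.comp ((continuous_const.sub continuous_id).abs.neg))).aestronglyMeasurable).mul hgi.aestronglyMeasurable) (ae_of_all _ fun y => ?_)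
    have h1 : Real.exp (-|z - y|) ≤ 1 := Real.exp_le_one_iff.2 (neg_nonpos.2 (abs_nonneg _))
    have h2 : (0:ℝ) < Real.exp (-|z - y|) := Real.exp_pos _
    simp only [Real.norm_eq_abs, abs_mul, Real.abs_exp]
    rw [abs_of_nonneg (by norm_num : (0:ℝ) ≤ 1/2)]
    nlinarith [abs_nonneg (g y)]
  have split : ∀ z : ℝ, ∫ y, (1/2 : ℝ) * Real.exp (-|z - y|) * g y
      = (1/2) * (Real.exp (-z) * (∫ y in Iic z, Real.exp y * g y)
        + Real.exp z * (∫ y in Ioi z, Real.exp (-y) * g y)) := by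
    intro z
    rw [← intervalIntegral.integral_Iic_add_Ioi (b := z) ((htot z).integrableOn) ((htot z).integrableOn)]
    have e1 : ∫ y in Iic z, (1/2 : ℝ) * Real.exp (-|z - y|) * g y
        = (1/2) * (Real.exp (-z) * ∫ y in Iic z, Real.exp y * g y) := by
      rw [← integral_const_mul, ← integral_const_mul]
      refine setIntegral_congr_fun measurableSet_Iic fun y hy => ?_
      have : |z - y| = z - y := abs_of_nonneg (by simpa using hy.out)
      rw [this, show -(z - y) = -z + y by ring, Real.exp_add]
      ring
    have e2 : ∫ y in Ioi z, (1/2 : ℝ) * Real.exp (-|z - y|) * g y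
        = (1/2) * (Real.exp z * ∫ y in Ioi z, Real.exp (-y) * g y) := by
      rw [← integral_const_mul, ← integral_const_mul]
      refine setIntegral_congr_fun measurableSet_Ioi fun y hy => ?_
      have : |z - y| = y - z := by
        rw [abs_of_nonpos (by simpa using hy.out.le)]; ring
      rw [this, show -(y - z) = z + -y by ring, Real.exp_add]
      ring
    rw [e1, e2]; ring
  have hA : HasDerivAt (fun z => ∫ y in Iic z, Real.exp y * g y) (Real.exp x * g x) x :=
    hasDerivAt_int_Iic (Real.continuous_exp.mul hgc) hIic x
  have hB : HasDerivAt (fun z => ∫ y in Ioi z, Real.exp (-y) * g y)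
      (-(Real.exp (-x) * g x)) x :=
    hasDerivAt_int_Ioi ((Real.continuous_exp.comp continuous_neg).mul hgc) hIoi x
  have hexpneg : HasDerivAt (fun z : ℝ => Real.exp (-z)) (Real.exp (-x) * (-1)) x :=
    (hasDerivAt_neg x).exp
  have hexp : HasDerivAt (fun z : ℝ => Real.exp z) (Real.exp x) x := Real.hasDerivAt_exp x
  have hmain := (((hexpneg.mul hA).add (hexp.mul hB)).const_mul (1/2 : ℝ))
  refine (HasDerivAt.congr_of_eventuallyEq ?_ (Eventually.of_forall split)).congr_deriv rfl
  refine hmain.congr_deriv ?_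
  rw [Real.exp_neg]
  field_simp
  ring

private lemma abstract_key {M dM d2M U U1 U2 K K' g : ℝ → ℝ}
    (hDM : ∀ y, HasDerivAt M (dM y) y) (hDdM : ∀ y, HasDerivAt dM (d2M y) y)
    (hDU : ∀ y, HasDerivAt U (U1 y) y) (hDU1 : ∀ y, HasDerivAt U1 (U2 y) y)
    (hDK : ∀ y, HasDerivAt K (K' y) y)
    (hKg : ∀ y, K y = g y + (U y - U2 y))
    (hKM : ∀ y, K' y = -(M y - d2M y))
    (hiM : Integrable (fun y => M y - d2M y))
    (hiU : Integrable (fun y => U y - U2 y))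
    (hig : Integrable g)
    (hMbot : Tendsto M atBot (nhds 0)) (hMtop : Tendsto M atTop (nhds 0))
    (hdMbot : ∃ c, Tendsto dM atBot (nhds c)) (hdMtop : ∃ c, Tendsto dM atTop (nhds c))
    (hUbot : Tendsto U atBot (nhds 0)) (hUtop : Tendsto U atTop (nhds 0))
    (hU1bot : Tendsto U1 atBot (nhds 0)) (hU1top : Tendsto U1 atTop (nhds 0))
    (hKbot : Tendsto K atBot (nhds 0)) (hKtop : Tendsto K atTop (nhds 0))
    (x : ℝ) :
    M x + U1 x + (1/2) * (Real.exp x * (∫ y in Ioi x, Real.exp (-y) * g y)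
      - Real.exp (-x) * (∫ y in Iic x, Real.exp y * g y)) = 0 := by
  obtain ⟨cb, hcb⟩ := hdMbot
  obtain ⟨ct, hct⟩ := hdMtop
  have expbot : Tendsto (fun y : ℝ => Real.exp y) atBot (nhds 0) := Real.tendsto_exp_atBot
  have exptop : Tendsto (fun y : ℝ => Real.exp (-y)) atTop (nhds 0) :=
    Real.tendsto_exp_atBot.comp tendsto_neg_atTop_atBot
  have hiK : Integrable K := by
    have : Integrable (fun y => g y + (U y - U2 y)) := hig.add hiU
    exact this.congr (ae_of_all _ fun y => (hKg y).symm)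
  have hiK' : Integrable K' := by
    have : Integrable (fun y => -(M y - d2M y)) := hiM.neg
    exact this.congr (ae_of_all _ fun y => (hKM y).symm)
  -- E1
  have h1 : ∫ y in Iic x, Real.exp y * (M y - d2M y) = Real.exp x * (M x - dM x) := by
    refine ftc_Iic (F := fun y => Real.exp y * (M y - dM y)) (fun y => ?_) ?_
      (intOn_exp_Iic hiM x)
    · have := (Real.hasDerivAt_exp y).mul ((hDM y).sub (hDdM y))
      exact this.congr_deriv (by simp only [Pi.sub_apply, Pi.add_apply]; ring)
    · have t1 : Tendsto (fun y => Real.exp y * M y) atBot (nhds 0) := mul_tendsto0 expbot hMbot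
      have t2 : Tendsto (fun y => Real.exp y * dM y) atBot (nhds 0) := by
        simpa using expbot.mul hcb
      have h := t1.sub t2
      rw [sub_zero] at h
      exact h.congr fun y => by ring
  -- E2
  have h2 : ∫ y in Ioi x, Real.exp (-y) * (M y - d2M y) = Real.exp (-x) * (M x + dM x) := by
    have := ftc_Ioi (F := fun y => -(Real.exp (-y) * (M y + dM y)))
      (F' := fun y => Real.exp (-y) * (M y - d2M y)) (fun y => ?_) ?_
      (intOn_expneg_Ioi hiM x)
    · rw [this]; ring
    · have := ((hasDerivAt_neg y).exp.mul ((hDM y).add (hDdM y))).neg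
      exact this.congr_deriv (by simp only [Pi.sub_apply, Pi.add_apply]; ring)
    · have t1 : Tendsto (fun y => Real.exp (-y) * M y) atTop (nhds 0) := mul_tendsto0 exptop hMtop
      have t2 : Tendsto (fun y => Real.exp (-y) * dM y) atTop (nhds 0) := by
        simpa using exptop.mul hct
      have h := (t1.add t2).neg
      rw [add_zero, neg_zero] at h
      exact h.congr fun y => by ring
  -- E3
  have h3 : ∫ y in Iic x, Real.exp y * (U y - U2 y) = Real.exp x * (U x - U1 x) := by
    refine ftc_Iic (F := fun y => Real.exp y * (U y - U1 y)) (fun y => ?_) ?_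
      (intOn_exp_Iic hiU x)
    · have := (Real.hasDerivAt_exp y).mul ((hDU y).sub (hDU1 y))
      exact this.congr_deriv (by simp only [Pi.sub_apply, Pi.add_apply]; ring)
    · have h := (mul_tendsto0 expbot hUbot).sub (mul_tendsto0 expbot hU1bot)
      rw [sub_zero] at h
      exact h.congr fun y => by ring
  -- E4
  have h4 : ∫ y in Ioi x, Real.exp (-y) * (U y - U2 y) = Real.exp (-x) * (U x + U1 x) := by
    have := ftc_Ioi (F := fun y => -(Real.exp (-y) * (U y + U1 y)))
      (F' := fun y => Real.exp (-y) * (U y - U2 y)) (fun y => ?_) ?_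
      (intOn_expneg_Ioi hiU x)
    · rw [this]; ring
    · have := ((hasDerivAt_neg y).exp.mul ((hDU y).add (hDU1 y))).neg
      exact this.congr_deriv (by simp only [Pi.sub_apply, Pi.add_apply]; ring)
    · have h := ((mul_tendsto0 exptop hUtop).add (mul_tendsto0 exptop hU1top)).neg
      rw [add_zero, neg_zero] at h
      exact h.congr fun y => by ring
  -- E5
  have h5 : ∫ y in Iic x, Real.exp y * (K y + K' y) = Real.exp x * K x := by
    refine ftc_Iic (F := fun y => Real.exp y * K y) (fun y => ?_) ?_
      (intOn_exp_Iic (hiK.add hiK') x)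
    · have := (Real.hasDerivAt_exp y).mul (hDK y)
      exact this.congr_deriv (by ring)
    · exact mul_tendsto0 expbot hKbot
  -- E6
  have h6 : ∫ y in Ioi x, Real.exp (-y) * (K y - K' y) = Real.exp (-x) * K x := by
    have := ftc_Ioi (F := fun y => -(Real.exp (-y) * K y))
      (F' := fun y => Real.exp (-y) * (K y - K' y)) (fun y => ?_) ?_
      (intOn_expneg_Ioi (hiK.sub hiK') x)
    · rw [this]; ring
    · have := ((hasDerivAt_neg y).exp.mul (hDK y)).neg
      exact this.congr_deriv (by ring)
    · have h := (mul_tendsto0 exptop hKtop).neg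
      rw [neg_zero] at h
      exact h.congr fun y => by ring
  -- splits
  have s1 : ∫ y in Iic x, Real.exp y * (K y + K' y)
      = ((∫ y in Iic x, Real.exp y * g y) + ∫ y in Iic x, Real.exp y * (U y - U2 y))
        - ∫ y in Iic x, Real.exp y * (M y - d2M y) := by
    have e : ∫ y in Iic x, Real.exp y * (K y + K' y)
        = ∫ y in Iic x, (Real.exp y * g y + Real.exp y * (U y - U2 y)
            - Real.exp y * (M y - d2M y)) := by
      refine setIntegral_congr_fun measurableSet_Iic fun y _ => ?_
      rw [hKg y, hKM y]; ring
    have hA : IntegrableOn (fun y => Real.exp y * g y + Real.exp y * (U y - U2 y)) (Iic x) :=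
      (intOn_exp_Iic hig x).add (intOn_exp_Iic hiU x)
    rw [e, integral_sub hA (intOn_exp_Iic hiM x),
      integral_add (intOn_exp_Iic hig x) (intOn_exp_Iic hiU x)]
  have s2 : ∫ y in Ioi x, Real.exp (-y) * (K y - K' y)
      = ((∫ y in Ioi x, Real.exp (-y) * g y) + ∫ y in Ioi x, Real.exp (-y) * (U y - U2 y))
        + ∫ y in Ioi x, Real.exp (-y) * (M y - d2M y) := by
    have e : ∫ y in Ioi x, Real.exp (-y) * (K y - K' y)
        = ∫ y in Ioi x, (Real.exp (-y) * g y + Real.exp (-y) * (U y - U2 y)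
            + Real.exp (-y) * (M y - d2M y)) := by
      refine setIntegral_congr_fun measurableSet_Ioi fun y _ => ?_
      rw [hKg y, hKM y]; ring
    have hA : IntegrableOn (fun y => Real.exp (-y) * g y + Real.exp (-y) * (U y - U2 y)) (Ioi x) :=
      (intOn_expneg_Ioi hig x).add (intOn_expneg_Ioi hiU x)
    rw [e, integral_add hA (intOn_expneg_Ioi hiM x),
      integral_add (intOn_expneg_Ioi hig x) (intOn_expneg_Ioi hiU x)]
  rw [h5, h1, h3] at s1
  rw [h6, h2, h4] at s2
  have hI1 : (∫ y in Iic x, Real.exp y * g y)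
      = Real.exp x * (K x - U x + U1 x + M x - dM x) := by linear_combination -s1
  have hI2 : (∫ y in Ioi x, Real.exp (-y) * g y)
      = Real.exp (-x) * (K x - U x - U1 x - M x - dM x) := by linear_combination -s2
  rw [hI1, hI2, Real.exp_neg]
  field_simp
  ring

private lemma hasDerivAt_parametric {f : ℝ → ℝ → ℝ}
    (hf : ContDiff ℝ (⊤ : ℕ∞) (fun q : ℝ × ℝ => f q.1 q.2)) (x t : ℝ) :
    HasDerivAt (fun τ => f x τ)
      (fderiv ℝ (fun q : ℝ × ℝ => f q.1 q.2) (x, t) (0, 1)) t := by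
  have h1 : HasDerivAt (fun τ : ℝ => ((x, τ) : ℝ × ℝ)) ((0 : ℝ), (1 : ℝ)) t :=
    (hasDerivAt_const t x).prodMk (hasDerivAt_id t)
  exact (((hf.differentiable (by simp)) (x, t)).hasFDerivAt).comp_hasDerivAt t h1

private lemma contDiff_partial_t {f : ℝ → ℝ → ℝ}
    (hf : ContDiff ℝ (⊤ : ℕ∞) (fun q : ℝ × ℝ => f q.1 q.2)) (t : ℝ) :
    ContDiff ℝ (⊤ : ℕ∞) (fun x => deriv (fun τ => f x τ) t) := by
  have heq : (fun x => deriv (fun τ => f x τ) t)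
      = fun x => fderiv ℝ (fun q : ℝ × ℝ => f q.1 q.2) (x, t) (0, 1) :=
    funext fun x => (hasDerivAt_parametric hf x t).deriv
  rw [heq]
  have hfd : ContDiff ℝ (⊤ : ℕ∞) (fderiv ℝ (fun q : ℝ × ℝ => f q.1 q.2)) :=
    hf.fderiv_right (by simp)
  exact (hfd.comp (contDiff_id.prodMk contDiff_const)).clm_apply contDiff_const


/-- for smooth decaying solutions of the CCCH system in `(u,v)` form,
`L = u + v` satisfies the conservation law
`(u+v)_t + ∂ₓ(uv + p * (2uv + uₓvₓ)) = 0` with `p x = (1/2) e^{-|x|}`. -/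
theorem stmt8 (u v w : ℝ → ℝ → ℝ)
    (hu : ContDiff ℝ (⊤ : ℕ∞) (fun q : ℝ × ℝ => u q.1 q.2))
    (hv : ContDiff ℝ (⊤ : ℕ∞) (fun q : ℝ × ℝ => v q.1 q.2))
    (hdecay : ∀ t : ℝ,
      DecaysNicely (fun x => u x t) ∧ DecaysNicely (fun x => v x t) ∧
      DecaysNicely (fun x => deriv (fun x' => u x' t) x) ∧
      DecaysNicely (fun x => deriv (fun x' => v x' t) x) ∧
      DecaysNicely (fun x => deriv (deriv (fun x' => u x' t)) x) ∧
      DecaysNicely (fun x => deriv (deriv (fun x' => v x' t)) x) ∧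
      DecaysNicely (fun x => deriv (deriv (deriv (fun x' => u x' t))) x) ∧
      DecaysNicely (fun x => deriv (deriv (deriv (fun x' => v x' t))) x) ∧
      DecaysNicely (fun x => deriv (fun τ => u x τ) t) ∧
      DecaysNicely (fun x => deriv (fun τ => v x τ) t) ∧
      DecaysNicely (fun x => deriv (deriv (fun x' => deriv (fun τ => u x' τ) t)) x) ∧
      DecaysNicely (fun x => deriv (deriv (fun x' => deriv (fun τ => v x' τ) t)) x))
    (heq1 : ∀ x t : ℝ,
      deriv (fun τ => u x τ) t - deriv (deriv (fun x' => deriv (fun τ => u x' τ) t)) x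
        + 2 * deriv (fun x' => v x' t) x * u x t
        - 2 * deriv (fun x' => v x' t) x * deriv (deriv (fun x' => u x' t)) x
        + v x t * deriv (fun x' => u x' t) x
        - v x t * deriv (deriv (deriv (fun x' => u x' t))) x = 0)
    (heq2 : ∀ x t : ℝ,
      deriv (fun τ => v x τ) t - deriv (deriv (fun x' => deriv (fun τ => v x' τ) t)) x
        + 2 * deriv (fun x' => u x' t) x * v x t
        - 2 * deriv (fun x' => u x' t) x * deriv (deriv (fun x' => v x' t)) x
        + u x t * deriv (fun x' => v x' t) x
        - u x t * deriv (deriv (deriv (fun x' => v x' t))) x = 0)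
    (hw : ∀ x t, w x t = ∫ y, (1 / 2) * Real.exp (-|x - y|) *
        (2 * u y t * v y t + deriv (fun x' => u x' t) y * deriv (fun x' => v x' t) y)) :
    ∀ x t : ℝ,
      deriv (fun τ => u x τ + v x τ) t
        + deriv (fun x' => u x' t * v x' t + w x' t) x = 0 := by
  intro x t
  obtain ⟨dnu, dnv, dnu1, dnv1, dnu2, dnv2, dnu3, dnv3, dnut, dnvt, dnut2, dnvt2⟩ := hdecay t
  -- single-variable functions at fixed t
  set a : ℝ → ℝ := fun x' => u x' t with ha_def
  set b : ℝ → ℝ := fun x' => v x' t with hb_def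
  set ut : ℝ → ℝ := fun x' => deriv (fun τ => u x' τ) t with hut_def
  set vt : ℝ → ℝ := fun x' => deriv (fun τ => v x' τ) t with hvt_def
  set M : ℝ → ℝ := fun x' => ut x' + vt x' with hM_def
  -- smoothness
  have hchain : ∀ (f : ℝ → ℝ), ContDiff ℝ (⊤ : ℕ∞) f → ∀ y, HasDerivAt f (deriv f y) y :=
    fun f hf y => ((hf.differentiable (by simp)) y).hasDerivAt
  have hder_cd : ∀ (f : ℝ → ℝ), ContDiff ℝ (⊤ : ℕ∞) f → ContDiff ℝ (⊤ : ℕ∞) (deriv f) :=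
    fun f hf => (contDiff_infty_iff_deriv.mp hf).2
  have ha : ContDiff ℝ (⊤ : ℕ∞) a :=
    (hu.of_le (by simp)).comp (contDiff_id.prodMk contDiff_const)
  have hb : ContDiff ℝ (⊤ : ℕ∞) b :=
    (hv.of_le (by simp)).comp (contDiff_id.prodMk contDiff_const)
  have hda : ContDiff ℝ (⊤ : ℕ∞) (deriv a) := hder_cd a ha
  have hdb : ContDiff ℝ (⊤ : ℕ∞) (deriv b) := hder_cd b hb
  have hd2a : ContDiff ℝ (⊤ : ℕ∞) (deriv (deriv a)) := hder_cd _ hda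
  have hd2b : ContDiff ℝ (⊤ : ℕ∞) (deriv (deriv b)) := hder_cd _ hdb
  have hut_cd : ContDiff ℝ (⊤ : ℕ∞) ut := contDiff_partial_t hu t
  have hvt_cd : ContDiff ℝ (⊤ : ℕ∞) vt := contDiff_partial_t hv t
  have hM_cd : ContDiff ℝ (⊤ : ℕ∞) M := hut_cd.add hvt_cd
  -- second derivative of M splits
  have hdM_split : deriv M = fun y => deriv ut y + deriv vt y := by
    funext y
    exact deriv_add ((hut_cd.differentiable (by simp)) y) ((hvt_cd.differentiable (by simp)) y)
  have hd2M_split : deriv (deriv M) = fun y => deriv (deriv ut) y + deriv (deriv vt) y := by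
    rw [hdM_split]
    funext y
    exact deriv_add (((hder_cd ut hut_cd).differentiable (by simp)) y)
      (((hder_cd vt hvt_cd).differentiable (by simp)) y)
  -- decay bundles
  have DNadd : ∀ (f g : ℝ → ℝ), DecaysNicely f → DecaysNicely g →
      DecaysNicely (fun y => f y + g y) := fun f g hf hg =>
    ⟨hf.1.add hg.1, by simpa using hf.2.1.add hg.2.1, by simpa using hf.2.2.add hg.2.2⟩
  have dnM : DecaysNicely M := DNadd ut vt dnut dnvt
  have dnM2 : DecaysNicely (deriv (deriv M)) := by
    rw [hd2M_split]; exact DNadd _ _ dnut2 dnvt2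
  -- integrable products helper
  have ip : ∀ (f h : ℝ → ℝ), DecaysNicely h → DecaysNicely f → Continuous f →
      Integrable (fun y => f y * h y) := fun f h hh hf hfc =>
    int_mul_bdd hh.1 hfc hf.2.1 hf.2.2
  -- the functions of abstract_key
  set g : ℝ → ℝ := fun y => 2 * a y * b y + deriv a y * deriv b y with hg_def
  set U : ℝ → ℝ := fun y => a y * b y with hU_def
  set U1 : ℝ → ℝ := fun y => deriv a y * b y + a y * deriv b y with hU1_def
  set U2 : ℝ → ℝ := fun y => deriv (deriv a) y * b y + 2 * (deriv a y * deriv b y)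
    + a y * deriv (deriv b) y with hU2_def
  set K : ℝ → ℝ := fun y => 3 * (a y * b y) - deriv a y * deriv b y
    - a y * deriv (deriv b) y - b y * deriv (deriv a) y with hK_def
  set K' : ℝ → ℝ := fun y => 3 * (deriv a y * b y + a y * deriv b y)
    - 2 * (deriv (deriv a) y * deriv b y + deriv a y * deriv (deriv b) y)
    - (a y * deriv (deriv (deriv b)) y + b y * deriv (deriv (deriv a)) y) with hK'_def
  -- derivative facts
  have hDM : ∀ y, HasDerivAt M (deriv M y) y := hchain M hM_cd
  have hDdM : ∀ y, HasDerivAt (deriv M) (deriv (deriv M) y) y :=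
    hchain (deriv M) (hder_cd M hM_cd)
  have hDU : ∀ y, HasDerivAt U (U1 y) y := fun y => (hchain a ha y).mul (hchain b hb y)
  have hDU1 : ∀ y, HasDerivAt U1 (U2 y) y := by
    intro y
    have h := ((hchain (deriv a) hda y).mul (hchain b hb y)).add
      ((hchain a ha y).mul (hchain (deriv b) hdb y))
    refine h.congr_deriv ?_
    simp only [hU2_def]; ring
  have hDK : ∀ y, HasDerivAt K (K' y) y := by
    intro y
    have h := (((((hchain a ha y).mul (hchain b hb y)).const_mul 3).sub
        ((hchain (deriv a) hda y).mul (hchain (deriv b) hdb y))).sub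
        (((hchain a ha y).mul (hchain (deriv (deriv b)) hd2b y)))).sub
        ((hchain b hb y).mul (hchain (deriv (deriv a)) hd2a y))
    refine h.congr_deriv ?_
    simp only [hK'_def]; ring
  -- the PDE, summed
  have hKM : ∀ y, K' y = -(M y - deriv (deriv M) y) := by
    intro y
    have e1 : ut y - deriv (deriv ut) y + 2 * deriv b y * a y
        - 2 * deriv b y * deriv (deriv a) y + b y * deriv a y
        - b y * deriv (deriv (deriv a)) y = 0 := heq1 y t
    have e2 : vt y - deriv (deriv vt) y + 2 * deriv a y * b y
        - 2 * deriv a y * deriv (deriv b) y + a y * deriv b y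
        - a y * deriv (deriv (deriv b)) y = 0 := heq2 y t
    have hsplit : deriv (deriv M) y = deriv (deriv ut) y + deriv (deriv vt) y :=
      congrFun hd2M_split y
    have hMy : M y = ut y + vt y := rfl
    have hK'y : K' y = 3 * (deriv a y * b y + a y * deriv b y)
        - 2 * (deriv (deriv a) y * deriv b y + deriv a y * deriv (deriv b) y)
        - (a y * deriv (deriv (deriv b)) y + b y * deriv (deriv (deriv a)) y) := rfl
    rw [hK'y, hMy, hsplit]
    linarith
  have hKg : ∀ y, K y = g y + (U y - U2 y) := by
    intro y
    have h1 : K y = 3 * (a y * b y) - deriv a y * deriv b y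
        - a y * deriv (deriv b) y - b y * deriv (deriv a) y := rfl
    have h2 : g y = 2 * a y * b y + deriv a y * deriv b y := rfl
    have h3 : U y = a y * b y := rfl
    have h4 : U2 y = deriv (deriv a) y * b y + 2 * (deriv a y * deriv b y)
        + a y * deriv (deriv b) y := rfl
    rw [h1, h2, h3, h4]; ring
  -- integrability
  have iU : Integrable U := ip a b dnv dnu ha.continuous
  have iU2 : Integrable U2 := by
    have i1 : Integrable (fun y => deriv (deriv a) y * b y) :=
      ip _ b dnv dnu2 hd2a.continuous
    have i2 : Integrable (fun y => 2 * (deriv a y * deriv b y)) :=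
      (ip _ _ dnv1 dnu1 hda.continuous).const_mul 2
    have i3 : Integrable (fun y => a y * deriv (deriv b) y) :=
      ip a _ dnv2 dnu ha.continuous
    exact (i1.add i2).add i3
  have hiU : Integrable (fun y => U y - U2 y) := iU.sub iU2
  have hig : Integrable g := by
    have i1 : Integrable (fun y => 2 * a y * b y) :=
      (iU.const_mul 2).congr (ae_of_all _ fun y => (mul_assoc 2 (a y) (b y)).symm)
    exact i1.add (ip _ _ dnv1 dnu1 hda.continuous)
  have hiM : Integrable (fun y => M y - deriv (deriv M) y) := dnM.1.sub dnM2.1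
  -- limits
  have hdMbot : ∃ c, Tendsto (deriv M) atBot (nhds c) :=
    tendsto_atBot_of_deriv_int hDdM dnM2.1
  have hdMtop : ∃ c, Tendsto (deriv M) atTop (nhds c) :=
    tendsto_atTop_of_deriv_int hDdM dnM2.1
  have hUbot : Tendsto U atBot (nhds 0) := mul_tendsto0 dnu.2.2 dnv.2.2
  have hUtop : Tendsto U atTop (nhds 0) := mul_tendsto0 dnu.2.1 dnv.2.1
  have hU1bot : Tendsto U1 atBot (nhds 0) := by
    have := (mul_tendsto0 dnu1.2.2 dnv.2.2).add (mul_tendsto0 dnu.2.2 dnv1.2.2)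
    simpa using this
  have hU1top : Tendsto U1 atTop (nhds 0) := by
    have := (mul_tendsto0 dnu1.2.1 dnv.2.1).add (mul_tendsto0 dnu.2.1 dnv1.2.1)
    simpa using this
  have hKbot : Tendsto K atBot (nhds 0) := by
    have := ((((mul_tendsto0 dnu.2.2 dnv.2.2).const_mul 3).sub
      (mul_tendsto0 dnu1.2.2 dnv1.2.2)).sub
      (mul_tendsto0 dnu.2.2 dnv2.2.2)).sub (mul_tendsto0 dnv.2.2 dnu2.2.2)
    simpa using this
  have hKtop : Tendsto K atTop (nhds 0) := by
    have := ((((mul_tendsto0 dnu.2.1 dnv.2.1).const_mul 3).sub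
      (mul_tendsto0 dnu1.2.1 dnv1.2.1)).sub
      (mul_tendsto0 dnu.2.1 dnv2.2.1)).sub (mul_tendsto0 dnv.2.1 dnu2.2.1)
    simpa using this
  -- the main integral identity
  have hmain := abstract_key hDM hDdM hDU hDU1 hDK hKg hKM hiM hiU hig
    dnM.2.2 dnM.2.1 hdMbot hdMtop hUbot hUtop hU1bot hU1top hKbot hKtop x
  -- derivative of w
  have hgc : Continuous g :=
    ((continuous_const.mul ha.continuous).mul hb.continuous).add
      (hda.continuous.mul hdb.continuous)
  have hwD : HasDerivAt (fun x' => w x' t)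
      ((1/2) * (Real.exp x * (∫ y in Ioi x, Real.exp (-y) * g y)
        - Real.exp (-x) * (∫ y in Iic x, Real.exp y * g y))) x := by
    have h := hasDerivAt_conv (g := g) hgc hig x
    refine h.congr_of_eventuallyEq (Eventually.of_forall fun z => ?_)
    exact hw z t
  -- assemble
  have hT : deriv (fun τ => u x τ + v x τ) t = ut x + vt x :=
    deriv_add (hasDerivAt_parametric hu x t).differentiableAt
      (hasDerivAt_parametric hv x t).differentiableAt
  have hW : HasDerivAt (fun x' => u x' t * v x' t + w x' t)
      (U1 x + (1/2) * (Real.exp x * (∫ y in Ioi x, Real.exp (-y) * g y)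
        - Real.exp (-x) * (∫ y in Iic x, Real.exp y * g y))) x :=
    ((hchain a ha x).mul (hchain b hb x)).add hwD
  rw [hT, hW.deriv]
  have hMx : M x = ut x + vt x := rfl
  linarith [hmain, hMx]
end

section
/- Suppose m : ℝ → ℝ is continuous with compact support and u = p * m with p(x) = (1/2)e^{-|x|}. Then u has compact support if and only if ∫_ℝ e^x m(x) dx = 0 and ∫_ℝ e^{-x} m(x) dx = 0. -/
open MeasureTheory Real Set

/-- for continuous compactly supported `m` and `u = p * m`,
`u` has compact support iff `∫ e^x m dx = 0` and `∫ e^{-x} m dx = 0`. -/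
theorem stmt12 (m u : ℝ → ℝ)
    (hmc : Continuous m)
    (hms : HasCompactSupport m)
    (hu : ∀ x, u x = ∫ y, (1 / 2) * Real.exp (-|x - y|) * m y) :
    HasCompactSupport u ↔
      ((∫ x, Real.exp x * m x) = 0 ∧ (∫ x, Real.exp (-x) * m x) = 0) := by
  obtain ⟨R, hR⟩ := hms.isCompact.isBounded.subset_closedBall 0
  rw [Real.closedBall_eq_Icc, zero_sub, zero_add] at hR
  have hA : ∀ x, R ≤ x → u x = ((1:ℝ) / 2) * Real.exp (-x) * ∫ y, Real.exp y * m y := by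
    intro x hx
    rw [hu x]
    have : (fun y => (1 / 2) * Real.exp (-|x - y|) * m y)
        = fun y => (((1:ℝ) / 2) * Real.exp (-x)) * (Real.exp y * m y) := by
      funext y
      by_cases h : m y = 0
      · simp [h]
      · have hy : y ∈ Icc (-R) R := hR (subset_tsupport m (by simpa using h))
        rw [abs_of_nonneg (by linarith [hy.2] : (0:ℝ) ≤ x - y),
          show -(x - y) = -x + y by ring, Real.exp_add]
        ring
    rw [this, MeasureTheory.integral_const_mul]
  have hB : ∀ x, x ≤ -R → u x = ((1:ℝ) / 2) * Real.exp x * ∫ y, Real.exp (-y) * m y := by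
    intro x hx
    rw [hu x]
    have : (fun y => (1 / 2) * Real.exp (-|x - y|) * m y)
        = fun y => (((1:ℝ) / 2) * Real.exp x) * (Real.exp (-y) * m y) := by
      funext y
      by_cases h : m y = 0
      · simp [h]
      · have hy : y ∈ Icc (-R) R := hR (subset_tsupport m (by simpa using h))
        rw [abs_of_nonpos (by linarith [hy.1] : x - y ≤ 0), neg_neg,
          show x - y = x + -y by ring, Real.exp_add]
        ring
    rw [this, MeasureTheory.integral_const_mul]
  constructor
  · intro h
    obtain ⟨r, hr⟩ := h.isBounded.subset_closedBall 0
    set X : ℝ := max R (max r 0) + 1 with hX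
    have hXR : R ≤ X := by
      have := le_max_left R (max r 0); linarith
    have hXr : r < X := by
      have h1 := le_max_left r (0:ℝ)
      have h2 := le_max_right R (max r 0); linarith
    have hXpos : 0 < X := by
      have h1 := le_max_right r (0:ℝ)
      have h2 := le_max_right R (max r 0); linarith
    have huX : u X = 0 := by
      apply image_eq_zero_of_notMem_tsupport
      intro hmem
      have := hr hmem
      rw [Metric.mem_closedBall, Real.dist_eq, sub_zero, abs_of_pos hXpos] at this
      linarith
    have huX' : u (-X) = 0 := by
      apply image_eq_zero_of_notMem_tsupport
      intro hmem
      have := hr hmem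
      rw [Metric.mem_closedBall, Real.dist_eq, sub_zero, abs_of_neg (by linarith)] at this
      linarith
    rw [hA X hXR] at huX
    rw [hB (-X) (by linarith)] at huX'
    constructor
    · rcases mul_eq_zero.1 huX with h' | h'
      · rcases mul_eq_zero.1 h' with h'' | h''
        · norm_num at h''
        · exact absurd h'' (Real.exp_ne_zero _)
      · exact h'
    · rcases mul_eq_zero.1 huX' with h' | h'
      · rcases mul_eq_zero.1 h' with h'' | h''
        · norm_num at h''
        · exact absurd h'' (Real.exp_ne_zero _)
      · exact h'
  · rintro ⟨h1, h2⟩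
    apply HasCompactSupport.intro (isCompact_Icc (a := -R) (b := R))
    intro x hx
    rw [mem_Icc, not_and_or, not_le, not_le] at hx
    rcases hx with hx | hx
    · rw [hB x (by linarith), h2, mul_zero]
    · rw [hA x (by linarith), h1, mul_zero]
end
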